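/- For c > 0, the function f(λ) = (1/λ)(c - ln(1-λ)) on (0,1) attains its global minimum at λ* = 1 + 1/W₋₁(-e^{-(c+1)}), and the minimum value equals W·(c + ln(-W))/(1 + W), where W = W₋₁(-e^{-(c+1)}). -/

import Mathlib

/-!
The defining equation `W e^W = -e^{-(c+1)}` says `log (-W) = -(c+1) - W`. The tangent line of the
concave function `log` at `1/k` gives `log x ≤ k x - 1 - log k`; with `k = -W` and `x = 1 - λ` this
is `log (1 - λ) ≤ c + W λ`, i.e. `f λ ≥ -W`. Equality holds at the tangency point `1 - λ = -1/W`,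
and `-W` rewrites to the stated closed form.
-/

open Real Set

noncomputable def objective (c l : ℝ) : ℝ := 1 / l * (c - log (1 - l))

theorem log_le_mul_sub_one_sub_log {x k : ℝ} (hx : 0 < x) (hk : 0 < k) :
    log x ≤ k * x - 1 - log k := by
  have h := log_le_sub_one_of_pos (mul_pos hk hx)
  rw [log_mul hk.ne' hx.ne'] at h
  linarith

theorem log_neg_of_mul_exp_eq_neg_exp {W a : ℝ} (h : W * exp W = -exp a) :
    log (-W) = a - W := by
  have hexp : -W = exp (a - W) := by
    rw [exp_sub, eq_div_iff (exp_pos W).ne']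
    linarith
  rw [hexp, log_exp]

theorem one_add_inv_mem_Ioo {W : ℝ} (hW : W < -1) : 1 + 1 / W ∈ Ioo (0 : ℝ) 1 := by
  have hW0 : W < 0 := by linarith
  constructor
  · have : -1 < 1 / W := by rw [lt_div_iff_of_neg hW0]; linarith
    linarith
  · linarith [one_div_neg.mpr hW0]

section

variable {c W : ℝ} (hlog : log (-W) = -(c + 1) - W)
include hlog

theorem neg_le_objective (hW : W < 0) {l : ℝ} (hl : l ∈ Ioo (0 : ℝ) 1) :
    -W ≤ objective c l := by
  have htangent : log (1 - l) ≤ c + W * l := by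
    have := log_le_mul_sub_one_sub_log (sub_pos.mpr hl.2) (neg_pos.mpr hW)
    rw [hlog] at this
    linarith
  rw [objective, one_div_mul_eq_div, le_div_iff₀ hl.1]
  linarith

theorem objective_one_add_inv (hW : W < -1) : objective c (1 + 1 / W) = -W := by
  have hW0 : W ≠ 0 := by linarith
  have hsub : 1 - (1 + 1 / W) = (-W)⁻¹ := by
    field_simp
    ring
  rw [objective, hsub, log_inv, hlog, one_div_mul_eq_div,
    div_eq_iff (one_add_inv_mem_Ioo hW).1.ne']
  field_simp
  ring

theorem neg_eq_mul_add_log_div (hW : W < -1) : -W = W * (c + log (-W)) / (1 + W) := by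
  have hW1 : 1 + W ≠ 0 := by linarith
  rw [hlog, eq_div_iff hW1]
  ring

end

/-- For c > 0, f(λ) = (1/λ)(c - ln(1-λ)) on (0,1) attains its global minimum at
λ* = 1 + 1/W, with minimum value W·(c + ln(-W))/(1 + W), where W = W₋₁(-e^{-(c+1)}),
characterized as the real number W ≤ -1 with W·e^W = -e^{-(c+1)}. -/
theorem stmt_8 (c W : ℝ) (hc : 0 < c) (hW : W ≤ -1)
    (hWeq : W * Real.exp W = -Real.exp (-(c + 1))) :
    (1 + 1 / W ∈ Set.Ioo (0:ℝ) 1) ∧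
    (∀ l ∈ Set.Ioo (0:ℝ) 1,
      (1 / (1 + 1 / W)) * (c - Real.log (1 - (1 + 1 / W))) ≤
        (1 / l) * (c - Real.log (1 - l))) ∧
    (1 / (1 + 1 / W)) * (c - Real.log (1 - (1 + 1 / W))) =
      W * (c + Real.log (-W)) / (1 + W) := by
  have hlog := log_neg_of_mul_exp_eq_neg_exp hWeq
  have hWlt : W < -1 := by
    refine hW.lt_of_ne fun hW1 => ?_
    rw [hW1, neg_neg, log_one] at hlog
    linarith
  have hmin : objective c (1 + 1 / W) = -W := objective_one_add_inv hlog hWlt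
  refine ⟨one_add_inv_mem_Ioo hWlt, fun l hl => ?_, ?_⟩
  · change objective c (1 + 1 / W) ≤ objective c l
    exact hmin ▸ neg_le_objective hlog (by linarith) hl
  · change objective c (1 + 1 / W) = _
    exact hmin.trans (neg_eq_mul_add_log_div hlog hWlt)
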